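/- Let A be a ring of characteristic p, R an A-algebra, and M, N two R-modules. The map Θ : F^e_* M ⊗_A F^e_* N → F^e_*(M ⊗_A N) defined by F^e_* m ⊗_A F^e_* n ↦ F^e_*(m ⊗_A n) is a well-defined surjective homomorphism of R ⊗_A R-modules, and its kernel is the submodule generated by all elements F^e_*(a m) ⊗_A F^e_* n - F^e_* m ⊗_A F^e_*(a n) with a ∈ A, m ∈ M, n ∈ N. -/

import Mathlib

open TensorProduct

/-- `FStar p e M` is the abelian group `M` viewed as a module via restriction of
scalars along the `e`-th iterate of the Frobenius `x ↦ x^{p^e}`, i.e. `F^e_* M`. -/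
def FStar (_p _e : ℕ) (M : Type*) : Type _ := M

/-- The identification of `M` with `F^e_* M` as sets. -/
def FStar.of (p e : ℕ) {M : Type*} (m : M) : FStar p e M := m

instance (p e : ℕ) {M : Type*} [AddCommGroup M] : AddCommGroup (FStar p e M) :=
  inferInstanceAs (AddCommGroup M)

/-- The twisted module structure: `a • (F^e_* m) = F^e_* (a^{p^e} • m)`. -/
noncomputable instance (p e : ℕ) {A M : Type*} [CommRing A] [Fact p.Prime] [CharP A p]
    [AddCommGroup M] [Module A M] : Module A (FStar p e M) :=
  letI : ExpChar A p := ExpChar.prime Fact.out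
  Module.compHom M (iterateFrobenius A p e)

/-!
Both sides are quotients of the same abelian group `M ⊗[ℤ] N`: the source by the relations
`a^{p^e} m ⊗ n = m ⊗ a^{p^e} n`, the target by the coarser relations `a m ⊗ n = m ⊗ a n`.
So `Θ` is the identity on pure tensors, and its kernel is generated by the images of the coarser
relations. Concretely, `m ⊗ n ↦ [F^e_* m ⊗ F^e_* n]` is a well-defined additive map from
`M ⊗[A] N` to the quotient by these images, and it inverts `Θ` on that quotient.
-/

namespace FStar

def down {p e : ℕ} {M : Type*} (x : FStar p e M) : M := x

section Basic

variable {p e : ℕ} {M : Type*}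

theorem of_surjective : Function.Surjective (of p e : M → FStar p e M) :=
  fun x => ⟨down x, rfl⟩

variable [AddCommGroup M]

@[simp] theorem of_zero : of p e (0 : M) = 0 := rfl

@[simp] theorem of_add (m m' : M) : of p e (m + m') = of p e m + of p e m' := rfl

@[simp] theorem of_sub (m m' : M) : of p e (m - m') = of p e m - of p e m' := rfl

@[simp] theorem down_add (x y : FStar p e M) : down (x + y) = down x + down y := rfl

variable [Fact p.Prime] {A : Type*} [CommRing A] [CharP A p] [Module A M]

theorem down_smul (a : A) (x : FStar p e M) : down (a • x) = a ^ p ^ e • down x := by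
  have : ExpChar A p := ExpChar.prime Fact.out
  change iterateFrobenius A p e a • down x = _
  rw [iterateFrobenius_def]

theorem smul_of (a : A) (m : M) : a • of p e m = of p e (a ^ p ^ e • m) :=
  down_smul a (of p e m)

end Basic

variable (p e : ℕ) [Fact p.Prime] {A M N : Type*} [CommRing A] [CharP A p]
  [AddCommGroup M] [Module A M] [AddCommGroup N] [Module A N]

noncomputable def tensorMap : FStar p e M ⊗[A] FStar p e N →ₗ[A] FStar p e (M ⊗[A] N) :=
  TensorProduct.lift <| LinearMap.mk₂ A (fun x y => of p e (down x ⊗ₜ[A] down y))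
    (fun x x' y => by simp only [down_add, add_tmul, of_add])
    (fun a x y => by rw [down_smul, smul_of, smul_tmul'])
    (fun x y y' => by simp only [down_add, tmul_add, of_add])
    (fun a x y => by rw [down_smul, smul_of, tmul_smul])

@[simp] theorem tensorMap_tmul (m : M) (n : N) :
    tensorMap p e (of p e m ⊗ₜ[A] of p e n) = of p e (m ⊗ₜ[A] n) := rfl

theorem tensorMap_surjective :
    Function.Surjective (tensorMap p e : FStar p e M ⊗[A] FStar p e N →ₗ[A] _) := by
  intro x
  obtain ⟨w, rfl⟩ := of_surjective x
  induction w using TensorProduct.induction_on with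
  | zero => exact ⟨0, map_zero _⟩
  | tmul m n => exact ⟨_, tensorMap_tmul p e m n⟩
  | add w w' hw hw' =>
    obtain ⟨z, hz⟩ := hw
    obtain ⟨z', hz'⟩ := hw'
    exact ⟨z + z', by rw [map_add, hz, hz', of_add]⟩

variable (A M N) in
noncomputable def tensorRelations : Submodule A (FStar p e M ⊗[A] FStar p e N) :=
  Submodule.span A
    { z | ∃ (a : A) (m : M) (n : N),
      z = of p e (a • m) ⊗ₜ[A] of p e n - of p e m ⊗ₜ[A] of p e (a • n) }

theorem tensorRelations_le_ker : tensorRelations p e A M N ≤ LinearMap.ker (tensorMap p e) := by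
  rw [tensorRelations, Submodule.span_le]
  rintro - ⟨a, m, n, rfl⟩
  rw [SetLike.mem_coe, LinearMap.mem_ker, map_sub, tensorMap_tmul, tensorMap_tmul, ← of_sub,
    smul_tmul, sub_self, of_zero]

noncomputable def tensorRelationsLift :
    M ⊗[A] N →+ (FStar p e M ⊗[A] FStar p e N) ⧸ tensorRelations p e A M N :=
  TensorProduct.liftAddHom
    (AddMonoidHom.mk'
      (fun m => AddMonoidHom.mk' (fun n => Submodule.Quotient.mk (of p e m ⊗ₜ[A] of p e n))
        (fun n n' => by rw [of_add, tmul_add, Submodule.Quotient.mk_add]))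
      (fun m m' => by
        ext n
        simp only [of_add, add_tmul, Submodule.Quotient.mk_add, AddMonoidHom.mk'_apply,
          AddMonoidHom.add_apply]))
    (fun a m n => (Submodule.Quotient.eq _).mpr (Submodule.subset_span ⟨a, m, n, rfl⟩))

theorem tensorRelationsLift_tensorMap (z : FStar p e M ⊗[A] FStar p e N) :
    tensorRelationsLift p e (down (tensorMap p e z)) = Submodule.Quotient.mk z := by
  induction z using TensorProduct.induction_on with
  | zero => exact map_zero _
  | tmul x y => exact TensorProduct.liftAddHom_tmul _ _ _ _
  | add z z' hz hz' => rw [map_add, down_add, map_add, hz, hz', Submodule.Quotient.mk_add]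

theorem ker_tensorMap : LinearMap.ker (tensorMap p e) = tensorRelations p e A M N := by
  refine le_antisymm (fun z hz => ?_) (tensorRelations_le_ker p e)
  rw [← Submodule.Quotient.mk_eq_zero, ← tensorRelationsLift_tensorMap, LinearMap.mem_ker.mp hz]
  exact map_zero _

end FStar

theorem stmt_15_general (p e : ℕ) [Fact p.Prime]
    (A M N : Type*) [CommRing A] [CharP A p]
    [AddCommGroup M] [Module A M] [AddCommGroup N] [Module A N] :
    ∃ Θ : FStar p e M ⊗[A] FStar p e N →ₗ[A] FStar p e (M ⊗[A] N),
      (∀ (m : M) (n : N),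
        Θ (FStar.of p e m ⊗ₜ[A] FStar.of p e n) = FStar.of p e (m ⊗ₜ[A] n)) ∧
      Function.Surjective Θ ∧
      LinearMap.ker Θ = Submodule.span A
        { z : FStar p e M ⊗[A] FStar p e N | ∃ (a : A) (m : M) (n : N),
          z = FStar.of p e (a • m) ⊗ₜ[A] FStar.of p e n
            - FStar.of p e m ⊗ₜ[A] FStar.of p e (a • n) } :=
  ⟨FStar.tensorMap p e, FStar.tensorMap_tmul p e, FStar.tensorMap_surjective p e,
    FStar.ker_tensorMap p e⟩

theorem stmt_15 (p e : ℕ) [Fact p.Prime]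
    (A R M N : Type*) [CommRing A] [CharP A p] [CommRing R] [Algebra A R]
    [AddCommGroup M] [Module A M] [AddCommGroup N] [Module A N]
    [Module R M] [Module R N] [IsScalarTower A R M] [IsScalarTower A R N] :
    ∃ Θ : FStar p e M ⊗[A] FStar p e N →ₗ[A] FStar p e (M ⊗[A] N),
      (∀ (m : M) (n : N),
        Θ (FStar.of p e m ⊗ₜ[A] FStar.of p e n) = FStar.of p e (m ⊗ₜ[A] n)) ∧
      Function.Surjective Θ ∧
      LinearMap.ker Θ = Submodule.span A
        { z : FStar p e M ⊗[A] FStar p e N | ∃ (a : A) (m : M) (n : N),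
          z = FStar.of p e (a • m) ⊗ₜ[A] FStar.of p e n
            - FStar.of p e m ⊗ₜ[A] FStar.of p e (a • n) } :=
  stmt_15_general p e A M N
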